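/- arXiv:1404.6032 — 3 statements merged into one kernel-verified Lean document; each statement's English description precedes it below -/
import Mathlib

section
/- Let L : M_n^d → M_n be a linear map that has a right inverse R (i.e. L∘R = id on M_n). Then for every k ≥ 1 the ampliation L_k = id_k ⊗ L : M_{kn}^d → M_{kn} has a right inverse of operator norm at most n‖R‖. Consequently L is completely nonsingular and c(L) ≥ 1/(n‖R‖). -/
open Matrix Filter Topology
open scoped Matrix.Norms.L2Operator Kronecker

noncomputable section

/-- `n × n` complex matrices, with the `L²` operator norm. -/
abbrev Mat (n : ℕ) : Type := Matrix (Fin n) (Fin n) ℂ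

/-- `d`-tuples of `n × n` complex matrices, normed by the max of the operator norms. -/
abbrev MatTup (d n : ℕ) : Type := Fin d → Mat n

/-- `M^d`, the disjoint union over all `n` of the `d`-tuples of `n × n` matrices. -/
abbrev MSpace (d : ℕ) : Type := Σ n : ℕ, MatTup d n

/-- Free (noncommutative) polynomials in `d` variables over `ℂ`. -/
abbrev FreePoly (d : ℕ) : Type := FreeAlgebra ℂ (Fin d)

/-- Evaluation of a free polynomial at a `d`-tuple of matrices. -/
def polyEval {d n : ℕ} (p : FreePoly d) (x : MatTup d n) : Mat n :=
  FreeAlgebra.lift ℂ (fun i => x i) p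

/-- The (Fréchet) derivative of the evaluation of a free polynomial, `Dp(a)[h]`. -/
def polyDeriv {d n : ℕ} (p : FreePoly d) (a h : MatTup d n) : Mat n :=
  fderiv ℂ (fun x : MatTup d n => polyEval p x) a h

/-- Assemble a `2 × 2` block matrix.  -/
def blk {n m : ℕ} (A : Matrix (Fin n) (Fin n) ℂ) (B : Matrix (Fin n) (Fin m) ℂ)
    (C : Matrix (Fin m) (Fin n) ℂ) (D : Matrix (Fin m) (Fin m) ℂ) : Mat (n + m) :=
  Matrix.reindex finSumFinEquiv finSumFinEquiv (Matrix.fromBlocks A B C D)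

/-- Coordinatewise direct sum of tuples of matrices. -/
def dSum {d n m : ℕ} (x : MatTup d n) (y : MatTup d m) : MatTup d (n + m) :=
  fun r => blk (x r) 0 0 (y r)

/-- Coordinatewise conjugation `s⁻¹ x s`. -/
def simConj {d n : ℕ} (s : Mat n) (x : MatTup d n) : MatTup d n :=
  fun r => s⁻¹ * x r * s

/-- An nc domain: a d.u. open subset of `M^d` closed under direct sums and unitary
conjugations. -/
structure IsNCDomain {d : ℕ} (Ω : Set (MSpace d)) : Prop where
  duOpen : ∀ n : ℕ, IsOpen {x : MatTup d n | (⟨n, x⟩ : MSpace d) ∈ Ω}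
  dsum_mem : ∀ {n m : ℕ} (x : MatTup d n) (y : MatTup d m),
    (⟨n, x⟩ : MSpace d) ∈ Ω → (⟨m, y⟩ : MSpace d) ∈ Ω →
    (⟨n + m, dSum x y⟩ : MSpace d) ∈ Ω
  unitary_mem : ∀ {n : ℕ} (u : Matrix.unitaryGroup (Fin n) ℂ) (x : MatTup d n),
    (⟨n, x⟩ : MSpace d) ∈ Ω → (⟨n, simConj (u : Mat n) x⟩ : MSpace d) ∈ Ω

/-- A d.u. open subset of `M^d`: each slice is open. -/
def DUOpen {d : ℕ} (U : Set (MSpace d)) : Prop :=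
  ∀ n : ℕ, IsOpen {x : MatTup d n | (⟨n, x⟩ : MSpace d) ∈ U}

/-- An nc function on `Ω`: a graded function respecting direct sums and similarities. -/
structure IsNCFunctionOn {d : ℕ} (Ω : Set (MSpace d)) (f : ∀ n, MatTup d n → Mat n) : Prop where
  dsum_eq : ∀ {n m : ℕ} (x : MatTup d n) (y : MatTup d m),
    (⟨n, x⟩ : MSpace d) ∈ Ω → (⟨m, y⟩ : MSpace d) ∈ Ω →
    (⟨n + m, dSum x y⟩ : MSpace d) ∈ Ω →
    f (n + m) (dSum x y) = blk (f n x) 0 0 (f m y)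
  sim_eq : ∀ {n : ℕ} (s : Mat n) (x : MatTup d n), IsUnit s →
    (⟨n, x⟩ : MSpace d) ∈ Ω → (⟨n, simConj s x⟩ : MSpace d) ∈ Ω →
    f n (simConj s x) = s⁻¹ * f n x * s

/-- A fine open set: a union of nc domains. -/
def FineOpen {d : ℕ} (U : Set (MSpace d)) : Prop :=
  ∀ x ∈ U, ∃ Ω : Set (MSpace d), IsNCDomain Ω ∧ x ∈ Ω ∧ Ω ⊆ U

/-- A fine holomorphic function: an nc function on a fine open set, locally bounded in
the fine topology. -/
def IsFineHolo {d : ℕ} (U : Set (MSpace d)) (f : ∀ n, MatTup d n → Mat n) : Prop :=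
  FineOpen U ∧ IsNCFunctionOn U f ∧
    ∀ a ∈ U, ∃ Ω : Set (MSpace d), IsNCDomain Ω ∧ a ∈ Ω ∧ Ω ⊆ U ∧
      ∃ C : ℝ, ∀ x ∈ Ω, ‖f x.1 x.2‖ ≤ C

/-- `a^{(k)}`, the direct sum of `k` copies of `a`. -/
def ampTup {d n : ℕ} (k : ℕ) (a : MatTup d n) : MatTup d (k * n) :=
  fun r => Matrix.reindex finProdFinEquiv finProdFinEquiv
    ((1 : Matrix (Fin k) (Fin k) ℂ) ⊗ₖ a r)

/-- The basic fat neighborhood `F(a,r)`: all unitary conjugates of points within `r`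
of some `a^{(k)}`. -/
def FBall {d : ℕ} (a : MSpace d) (r : ℝ) : Set (MSpace d) :=
  {y | ∃ k : ℕ, 1 ≤ k ∧ ∃ x : MatTup d (k * a.1), ‖x - ampTup k a.2‖ < r ∧
    ∃ u : Matrix.unitaryGroup (Fin (k * a.1)) ℂ,
      y = ⟨k * a.1, simConj (u : Mat (k * a.1)) x⟩}

/-- A fat open set. -/
def FatOpen {d : ℕ} (U : Set (MSpace d)) : Prop :=
  ∀ y ∈ U, ∃ ε : ℝ, 0 < ε ∧ FBall y ε ⊆ U

/-- A fat holomorphic function: an nc function on a fat open set, locally bounded in the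
fat topology. -/
def IsFatHolo {d : ℕ} (U : Set (MSpace d)) (f : ∀ n, MatTup d n → Mat n) : Prop :=
  FatOpen U ∧ IsNCFunctionOn U f ∧
    ∀ a ∈ U, ∃ ε : ℝ, 0 < ε ∧ FBall a ε ⊆ U ∧
      ∃ C : ℝ, ∀ x ∈ FBall a ε, ‖f x.1 x.2‖ ≤ C

/-- The Hessian `Hf(a)[h,k]`: the derivative in direction `k` of `x ↦ Df(x)[h]`. -/
def ncHess {d n : ℕ} (f : ∀ m, MatTup d m → Mat m) (a h k : MatTup d n) : Mat n :=
  fderiv ℂ (fun x : MatTup d n => fderiv ℂ (f n) x h) a k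

/-- Join a `(d-k)`-tuple and a `k`-tuple into a `d`-tuple. -/
def joinTup {d k : ℕ} (hk : k ≤ d) {n : ℕ} (y : Fin (d - k) → Mat n) (z : Fin k → Mat n) :
    Fin d → Mat n :=
  fun j => if hj : (j : ℕ) < d - k then y ⟨j, hj⟩
    else z ⟨(j : ℕ) - (d - k), by have := j.isLt; omega⟩

/-- A tuple `a` is broad if every matrix is a polynomial in `a`. -/
def Broad {d n : ℕ} (a : MatTup d n) : Prop :=
  ∀ M : Mat n, ∃ p : FreePoly d, polyEval p a = M

/-- The ampliation `id_k ⊗ L` of a map `L : M_n^d → M_n`, acting blockwise on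
`M_{kn}^d` (identifying `M_{kn}` with `k × k` block matrices over `M_n`). -/
def ampFun {d n : ℕ} (L : MatTup d n → Mat n) (k : ℕ) (H : MatTup d (k * n)) : Mat (k * n) :=
  fun p q =>
    L (fun r s t => H r (finProdFinEquiv ((finProdFinEquiv.symm p).1, s))
        (finProdFinEquiv ((finProdFinEquiv.symm q).1, t)))
      (finProdFinEquiv.symm p).2 (finProdFinEquiv.symm q).2

/-- The set of operator norms of right inverses of the ampliation `L_k`. -/
def RightInvVals {d n : ℕ} (L : MatTup d n → Mat n) (k : ℕ) : Set ℝ :=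
  {c | ∃ S : Mat (k * n) →L[ℂ] MatTup d (k * n), (∀ Y, ampFun L k (S Y) = Y) ∧ ‖S‖ = c}

/-- `L` is completely nonsingular: every ampliation has a right inverse, and
`sup_k inf {‖R‖ : R right inverse of L_k} < ∞`. -/
def CompletelyNonsingular {d n : ℕ} (L : MatTup d n → Mat n) : Prop :=
  (∀ k : ℕ, 1 ≤ k → (RightInvVals L k).Nonempty) ∧
    BddAbove {c : ℝ | ∃ k : ℕ, 1 ≤ k ∧ c = sInf (RightInvVals L k)}

/-- `c(L) = (sup_k inf {‖R‖ : R right inverse of L_k})⁻¹`. -/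
def cConst {d n : ℕ} (L : MatTup d n → Mat n) : ℝ :=
  (sSup {c : ℝ | ∃ k : ℕ, 1 ≤ k ∧ c = sInf (RightInvVals L k)})⁻¹

/-- Evaluation of a `J × J` matrix of free polynomials at `x ∈ M_n^d`, as an
`Jn × Jn` matrix. -/
def matPolyEval {d J n : ℕ} (δ : Matrix (Fin J) (Fin J) (FreePoly d)) (x : MatTup d n) :
    Matrix (Fin (J * n)) (Fin (J * n)) ℂ :=
  fun p q => polyEval (δ (finProdFinEquiv.symm p).1 (finProdFinEquiv.symm q).1) x
    (finProdFinEquiv.symm p).2 (finProdFinEquiv.symm q).2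

/-- The basic free open set `G_δ = {x : ‖δ(x)‖ < 1}`. -/
def GSet {d J : ℕ} (δ : Matrix (Fin J) (Fin J) (FreePoly d)) : Set (MSpace d) :=
  {x | ‖matPolyEval δ x.2‖ < 1}

/-- The linear map `Γ ↦ aΓ - Γa` from `M_n` to `M_n^d`. -/
def commMap {d n : ℕ} (a : MatTup d n) : Mat n →ₗ[ℂ] MatTup d n where
  toFun := fun Γ => fun r => a r * Γ - Γ * a r
  map_add' := by
    intro Γ₁ Γ₂
    funext r
    simp only [Matrix.mul_add, Matrix.add_mul, Pi.add_apply]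
    abel
  map_smul' := by
    intro c Γ
    funext r
    simp [Matrix.mul_smul, Matrix.smul_mul, smul_sub]

/-- The subspace `{aΓ - Γa : Γ ∈ M_n}` of `M_n^d`. -/
def commSubspace {d n : ℕ} (a : MatTup d n) : Submodule ℂ (MatTup d n) :=
  LinearMap.range (commMap a)

end

/-!
The ampliation `R_k` of `R` is a right inverse of `L_k`. To bound its norm, fix a coordinate
`r` and cut a `kn × kn` matrix into the `n²` interleaved `k × k` slices indexed by
`(s, t) ∈ [n]²`. The `(s, t)` slice of `R_k(Y)_r` is the scalar functional
`f : Z ↦ R(Z)_r[s, t]` applied blockwise to `Y`, and a functional does not grow under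
ampliation: `⟨η, [f(Y_ij)] ξ⟩ = f((η ⊗ I)* Y (ξ ⊗ I))`, so `‖[f(Y_ij)]‖ ≤ ‖f‖ ‖Y‖ ≤ ‖R‖ ‖Y‖`.
A matrix all of whose `n²` slices have norm at most `C` has norm at most `nC` by
Cauchy–Schwarz. The supremum defining `c(L)⁻¹` is positive because `1 = ‖L_1 S‖ ≤ ‖L_1‖ ‖S‖`
for every right inverse `S` of `L_1`.
-/

namespace Matrix

variable {𝕜 : Type*} [RCLike 𝕜] {ι ι' κ κ' : Type*}
  [Fintype ι] [Fintype ι'] [Fintype κ] [Fintype κ']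

lemma norm_toLp_comp_equiv (e : ι ≃ κ) (v : κ → 𝕜) :
    ‖(EuclideanSpace.equiv ι 𝕜).symm (v ∘ e)‖ = ‖(EuclideanSpace.equiv κ 𝕜).symm v‖ := by
  rw [← sq_eq_sq₀ (norm_nonneg _) (norm_nonneg _), EuclideanSpace.norm_sq_eq,
    EuclideanSpace.norm_sq_eq]
  exact e.sum_comp fun j => ‖v j‖ ^ 2

variable [DecidableEq κ] [DecidableEq κ']

lemma l2_opNorm_le_of_mulVec_le {A : Matrix ι κ 𝕜} {C : ℝ} (hC : 0 ≤ C)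
    (h : ∀ x : EuclideanSpace 𝕜 κ, ‖(EuclideanSpace.equiv ι 𝕜).symm (A *ᵥ x)‖ ≤ C * ‖x‖) :
    ‖A‖ ≤ C :=
  ContinuousLinearMap.opNorm_le_bound _ hC h

lemma l2_opNorm_reindex_le (e : ι ≃ ι') (e' : κ ≃ κ') (A : Matrix ι κ 𝕜) :
    ‖reindex e e' A‖ ≤ ‖A‖ :=
  l2_opNorm_le_of_mulVec_le (norm_nonneg A) fun x => by
    rw [reindex_apply, submatrix_mulVec_equiv, norm_toLp_comp_equiv]
    calc _ ≤ ‖A‖ * ‖(EuclideanSpace.equiv κ 𝕜).symm (x ∘ e')‖ := A.l2_opNorm_mulVec _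
      _ = ‖A‖ * ‖x‖ := by rw [norm_toLp_comp_equiv]; rfl

lemma l2_opNorm_reindex (e : ι ≃ ι') (e' : κ ≃ κ') (A : Matrix ι κ 𝕜) :
    ‖reindex e e' A‖ = ‖A‖ :=
  (l2_opNorm_reindex_le e e' A).antisymm <| by
    simpa using l2_opNorm_reindex_le e.symm e'.symm (reindex e e' A)

lemma norm_entry_le_l2_opNorm (A : Matrix ι κ 𝕜) (i : ι) (j : κ) : ‖A i j‖ ≤ ‖A‖ :=
  calc ‖A i j‖ = ‖((EuclideanSpace.equiv ι 𝕜).symm (A *ᵥ EuclideanSpace.single j 1)) i‖ := by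
        simp
    _ ≤ ‖(EuclideanSpace.equiv ι 𝕜).symm (A *ᵥ EuclideanSpace.single j 1)‖ :=
        PiLp.norm_apply_le _ i
    _ ≤ ‖A‖ := by simpa using A.l2_opNorm_mulVec (EuclideanSpace.single j 1)

variable (κ) in
/-- The matrix of `ξ ⊗ I : 𝕜^κ → 𝕜^ι ⊗ 𝕜^κ`. -/
def tensorOne (ξ : EuclideanSpace 𝕜 ι) : Matrix (ι × κ) κ 𝕜 :=
  of fun p t => ξ p.1 * (1 : Matrix κ κ 𝕜) p.2 t

lemma l2_opNorm_tensorOne_le (ξ : EuclideanSpace 𝕜 ι) : ‖tensorOne κ ξ‖ ≤ ‖ξ‖ := by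
  refine l2_opNorm_le_of_mulVec_le (norm_nonneg ξ) fun x => ?_
  refine (sq_le_sq₀ (norm_nonneg _) (by positivity)).mp (le_of_eq ?_)
  simp [EuclideanSpace.norm_sq_eq, tensorOne, mulVec, dotProduct, one_apply, mul_pow,
    Fintype.sum_prod_type, Finset.sum_mul_sum]

lemma conjTranspose_tensorOne_mul_mul_tensorOne (η : EuclideanSpace 𝕜 ι)
    (ξ : EuclideanSpace 𝕜 ι') (Y : Matrix (ι × κ) (ι' × κ') 𝕜) :
    (tensorOne κ η)ᴴ * Y * tensorOne κ' ξ =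
      ∑ i, ∑ j, (star (η i) * ξ j) • (of fun s t => Y (i, s) (j, t)) := by
  ext s t
  simp only [mul_apply, sum_apply, smul_apply, conjTranspose_apply, tensorOne, of_apply,
    Fintype.sum_prod_type, one_apply, smul_eq_mul]
  simp [apply_ite (starRingEnd 𝕜), Finset.sum_comm (γ := ι), Finset.mul_sum, mul_comm,
    mul_left_comm]

variable [DecidableEq ι']

lemma l2_opNorm_le_card_mul_of_slices {M : Matrix (ι × κ) (ι' × κ) 𝕜} {C : ℝ} (hC : 0 ≤ C)
    (h : ∀ s t, ‖(of fun i j => M (i, s) (j, t) : Matrix ι ι' 𝕜)‖ ≤ C) :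
    ‖M‖ ≤ Fintype.card κ * C := by
  refine l2_opNorm_le_of_mulVec_le (by positivity) fun x => ?_
  set w : κ → EuclideanSpace 𝕜 ι' := fun t => (EuclideanSpace.equiv ι' 𝕜).symm fun j => x (j, t)
  have hrow : ∀ s, ‖(EuclideanSpace.equiv ι 𝕜).symm fun i => (M *ᵥ x) (i, s)‖
      ≤ C * ∑ t, ‖w t‖ := fun s => by
    have hsum : ((EuclideanSpace.equiv ι 𝕜).symm fun i => (M *ᵥ x) (i, s)) =
        ∑ t, (EuclideanSpace.equiv ι 𝕜).symm ((of fun i j => M (i, s) (j, t)) *ᵥ w t) := by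
      ext i
      simp [w, mulVec, dotProduct, Fintype.sum_prod_type, Finset.sum_comm (γ := ι')]
    rw [hsum, Finset.mul_sum]
    refine (norm_sum_le _ _).trans (Finset.sum_le_sum fun t _ => ?_)
    exact (l2_opNorm_mulVec _ _).trans (mul_le_mul_of_nonneg_right (h s t) (norm_nonneg _))
  have hx : ‖x‖ ^ 2 = ∑ t, ‖w t‖ ^ 2 := by
    simp only [EuclideanSpace.norm_sq_eq, Fintype.sum_prod_type, w]
    rw [Finset.sum_comm]
    rfl
  refine (sq_le_sq₀ (norm_nonneg _) (by positivity)).mp ?_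
  calc ‖(EuclideanSpace.equiv (ι × κ) 𝕜).symm (M *ᵥ x)‖ ^ 2
      = ∑ s, ‖(EuclideanSpace.equiv ι 𝕜).symm fun i => (M *ᵥ x) (i, s)‖ ^ 2 := by
        simp only [EuclideanSpace.norm_sq_eq, Fintype.sum_prod_type]
        rw [Finset.sum_comm]
        rfl
    _ ≤ ∑ _s : κ, C ^ 2 * (Fintype.card κ * ∑ t, ‖w t‖ ^ 2) := by
        gcongr with s
        calc _ ≤ (C * ∑ t, ‖w t‖) ^ 2 := pow_le_pow_left₀ (norm_nonneg _) (hrow s) 2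
          _ = C ^ 2 * (∑ t, ‖w t‖) ^ 2 := mul_pow _ _ 2
          _ ≤ _ := by gcongr; exact sq_sum_le_card_mul_sum_sq
    _ = (Fintype.card κ * C * ‖x‖) ^ 2 := by
        rw [Finset.sum_const, Finset.card_univ, nsmul_eq_mul, mul_pow, ← hx]
        ring

variable [DecidableEq ι]

lemma l2_opNorm_map_blocks_le (f : Matrix κ κ' 𝕜 →ₗ[𝕜] 𝕜) {C : ℝ} (hC : 0 ≤ C)
    (hf : ∀ Z, ‖f Z‖ ≤ C * ‖Z‖) (Y : Matrix (ι × κ) (ι' × κ') 𝕜) :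
    ‖(of fun i j => f (of fun s t => Y (i, s) (j, t)) : Matrix ι ι' 𝕜)‖ ≤ C * ‖Y‖ := by
  refine l2_opNorm_le_of_mulVec_le (by positivity) fun ξ => ?_
  set B : Matrix ι ι' 𝕜 := of fun i j => f (of fun s t => Y (i, s) (j, t))
  set η := (EuclideanSpace.equiv ι 𝕜).symm (B *ᵥ ξ)
  have hη : (‖η‖ : 𝕜) ^ 2 = f ((tensorOne κ η)ᴴ * Y * tensorOne κ' ξ) := by
    rw [← inner_self_eq_norm_sq_to_K, EuclideanSpace.inner_eq_star_dotProduct,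
      conjTranspose_tensorOne_mul_mul_tensorOne]
    simp only [map_sum, map_smul, smul_eq_mul, dotProduct, mul_assoc, ← Finset.mul_sum]
    refine Finset.sum_congr rfl fun i _ => ?_
    simp [η, B, mulVec, dotProduct, mul_comm]
  have hle : ‖η‖ ^ 2 ≤ C * ‖Y‖ * ‖ξ‖ * ‖η‖ :=
    calc ‖η‖ ^ 2 = ‖f ((tensorOne κ η)ᴴ * Y * tensorOne κ' ξ)‖ := by simp [← hη]
      _ ≤ C * ‖(tensorOne κ η)ᴴ * Y * tensorOne κ' ξ‖ := hf _
      _ ≤ C * (‖η‖ * ‖Y‖ * ‖ξ‖) := by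
        grw [l2_opNorm_mul, l2_opNorm_mul, l2_opNorm_conjTranspose, l2_opNorm_tensorOne_le,
          l2_opNorm_tensorOne_le]
      _ = C * ‖Y‖ * ‖ξ‖ * ‖η‖ := by ring
  have : 0 ≤ C * ‖Y‖ * ‖ξ‖ := by positivity
  nlinarith [norm_nonneg η]

end Matrix

noncomputable section Ampliation

variable {d n k : ℕ}

def matBlock (i j : Fin k) : Mat (k * n) →ₗ[ℂ] Mat n where
  toFun Y := of fun s t => Y (finProdFinEquiv (i, s)) (finProdFinEquiv (j, t))
  map_add' _ _ := rfl
  map_smul' _ _ := rfl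

lemma matBlock_apply (i j : Fin k) (Y : Mat (k * n)) (s t : Fin n) :
    matBlock i j Y s t = Y (finProdFinEquiv (i, s)) (finProdFinEquiv (j, t)) :=
  rfl

lemma ampFun_apply (L : MatTup d n → Mat n) (H : MatTup d (k * n)) (p q : Fin (k * n)) :
    ampFun L k H p q = L ((matBlock (finProdFinEquiv.symm p).1 (finProdFinEquiv.symm q).1).compLeft
      (Fin d) H) (finProdFinEquiv.symm p).2 (finProdFinEquiv.symm q).2 :=
  rfl

variable (k) in
def ampFunCLM (L : MatTup d n →ₗ[ℂ] Mat n) : MatTup d (k * n) →L[ℂ] Mat (k * n) :=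
  LinearMap.toContinuousLinearMap
    { toFun := ampFun L k
      map_add' H K := by ext p q; simp only [ampFun_apply, map_add]; rfl
      map_smul' c H := by ext p q; simp only [ampFun_apply, map_smul]; rfl }

variable (k) in
/-- The ampliation `id_k ⊗ R` of `R : M_n → M_n^d`, blockwise as in `ampFun`. -/
def ampRight (R : Mat n →L[ℂ] MatTup d n) : Mat (k * n) →L[ℂ] MatTup d (k * n) :=
  LinearMap.toContinuousLinearMap
    { toFun Y r := of fun p q => R (matBlock (finProdFinEquiv.symm p).1
        (finProdFinEquiv.symm q).1 Y) r (finProdFinEquiv.symm p).2 (finProdFinEquiv.symm q).2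
      map_add' Y Z := by ext r p q; simp only [map_add]; rfl
      map_smul' c Y := by ext r p q; simp only [map_smul]; rfl }

lemma ampRight_apply (R : Mat n →L[ℂ] MatTup d n) (Y : Mat (k * n)) (r : Fin d)
    (p q : Fin (k * n)) :
    ampRight k R Y r p q = R (matBlock (finProdFinEquiv.symm p).1 (finProdFinEquiv.symm q).1 Y) r
      (finProdFinEquiv.symm p).2 (finProdFinEquiv.symm q).2 :=
  rfl

lemma ampFun_ampRight {L : MatTup d n → Mat n} {R : Mat n →L[ℂ] MatTup d n}
    (hLR : ∀ Y, L (R Y) = Y) (Y : Mat (k * n)) : ampFun L k (ampRight k R Y) = Y := by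
  ext p q
  have hblock : ∀ i j : Fin k, (matBlock i j).compLeft (Fin d) (ampRight k R Y) =
      R (matBlock i j Y) := fun i j => by
    ext r s t
    simp only [LinearMap.compLeft_apply, Function.comp_apply, matBlock_apply, ampRight_apply,
      Equiv.symm_apply_apply]
  rw [ampFun_apply, hblock, hLR, matBlock_apply, Prod.mk.eta, Prod.mk.eta,
    Equiv.apply_symm_apply, Equiv.apply_symm_apply]

lemma norm_ampRight_le (R : Mat n →L[ℂ] MatTup d n) : ‖ampRight k R‖ ≤ n * ‖R‖ := by
  refine ContinuousLinearMap.opNorm_le_bound _ (by positivity) fun Y => ?_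
  refine (pi_norm_le_iff_of_nonneg (by positivity)).mpr fun r => ?_
  set e : Fin k × Fin n ≃ Fin (k * n) := finProdFinEquiv
  have hslice : ∀ s t, ‖(of fun i j => reindex e.symm e.symm (ampRight k R Y r) (i, s) (j, t) :
      Matrix (Fin k) (Fin k) ℂ)‖ ≤ ‖R‖ * ‖Y‖ := fun s t => by
    let f : Mat n →ₗ[ℂ] ℂ := entryLinearMap ℂ ℂ s t ∘ₗ LinearMap.proj r ∘ₗ R.toLinearMap
    have hf : ∀ Z, ‖f Z‖ ≤ ‖R‖ * ‖Z‖ := fun Z =>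
      calc ‖R Z r s t‖ ≤ ‖R Z r‖ := norm_entry_le_l2_opNorm _ s t
        _ ≤ ‖R Z‖ := norm_le_pi_norm _ r
        _ ≤ ‖R‖ * ‖Z‖ := R.le_opNorm Z
    calc _ = ‖(of fun i j => f (of fun s t => reindex e.symm e.symm Y (i, s) (j, t)) :
          Matrix (Fin k) (Fin k) ℂ)‖ := by
          congr 1
          ext i j
          simp only [f, e, reindex_apply, submatrix_apply, Equiv.symm_symm, of_apply,
            ampRight_apply, Equiv.symm_apply_apply]
          rfl
      _ ≤ ‖R‖ * ‖reindex e.symm e.symm Y‖ := l2_opNorm_map_blocks_le f (norm_nonneg R) hf _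
      _ = ‖R‖ * ‖Y‖ := by rw [l2_opNorm_reindex]
  calc ‖ampRight k R Y r‖ = ‖reindex e.symm e.symm (ampRight k R Y r)‖ :=
        (l2_opNorm_reindex _ _ _).symm
    _ ≤ Fintype.card (Fin n) * (‖R‖ * ‖Y‖) :=
        l2_opNorm_le_card_mul_of_slices (by positivity) hslice
    _ = n * ‖R‖ * ‖Y‖ := by rw [Fintype.card_fin, mul_assoc]

end Ampliation

section RightInverseNorms

variable {d n : ℕ}

lemma sInf_rightInvVals_le {L : MatTup d n → Mat n} {k : ℕ}
    {S : Mat (k * n) →L[ℂ] MatTup d (k * n)} (hS : ∀ Y, ampFun L k (S Y) = Y) :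
    sInf (RightInvVals L k) ≤ ‖S‖ :=
  csInf_le ⟨0, by rintro _ ⟨S, -, rfl⟩; exact norm_nonneg S⟩ ⟨S, hS, rfl⟩

lemma sInf_rightInvVals_pos (L : MatTup d n →ₗ[ℂ] Mat n) {k : ℕ} (hkn : 0 < k * n)
    (hne : (RightInvVals L k).Nonempty) : 0 < sInf (RightInvVals L k) := by
  have : Nonempty (Fin (k * n)) := ⟨⟨0, hkn⟩⟩
  have hlower : ∀ c ∈ RightInvVals L k, 1 ≤ ‖ampFunCLM k L‖ * c := by
    rintro _ ⟨S, hS, rfl⟩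
    have hid : (ampFunCLM k L).comp S = ContinuousLinearMap.id ℂ _ := ContinuousLinearMap.ext hS
    calc 1 = ‖(ampFunCLM k L).comp S‖ := by rw [hid, ContinuousLinearMap.norm_id]
      _ ≤ ‖ampFunCLM k L‖ * ‖S‖ := ContinuousLinearMap.opNorm_comp_le _ _
  obtain ⟨c, hc⟩ := hne
  have hpos : 0 < ‖ampFunCLM k L‖ := by
    refine (norm_nonneg _).lt_of_ne fun h => ?_
    have := hlower c hc
    rw [← h, zero_mul] at this
    exact absurd this (by norm_num)
  exact (inv_pos.mpr hpos).trans_le <|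
    le_csInf ⟨c, hc⟩ fun c' hc' => (inv_le_iff_one_le_mul₀' hpos).mpr (hlower c' hc')

variable {L : MatTup d n → Mat n} {B : ℝ}

lemma completelyNonsingular_of_forall_rightInv_norm_le
    (h : ∀ k, 1 ≤ k → ∃ S : Mat (k * n) →L[ℂ] MatTup d (k * n),
      (∀ Y, ampFun L k (S Y) = Y) ∧ ‖S‖ ≤ B) :
    CompletelyNonsingular L := by
  refine ⟨fun k hk => ?_, B, ?_⟩
  · obtain ⟨S, hS, -⟩ := h k hk
    exact ⟨‖S‖, S, hS, rfl⟩
  · rintro _ ⟨k, hk, rfl⟩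
    obtain ⟨S, hS, hSB⟩ := h k hk
    exact (sInf_rightInvVals_le hS).trans hSB

lemma inv_le_cConst_of_forall_rightInv_norm_le
    (h : ∀ k, 1 ≤ k → ∃ S : Mat (k * n) →L[ℂ] MatTup d (k * n),
      (∀ Y, ampFun L k (S Y) = Y) ∧ ‖S‖ ≤ B)
    (hpos : 0 < sInf (RightInvVals L 1)) :
    B⁻¹ ≤ cConst L := by
  have hbdd := (completelyNonsingular_of_forall_rightInv_norm_le h).2
  have hsup : sSup {c : ℝ | ∃ k : ℕ, 1 ≤ k ∧ c = sInf (RightInvVals L k)} ≤ B :=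
    csSup_le ⟨_, 1, le_rfl, rfl⟩ fun _ ⟨k, hk, hc⟩ => by
      obtain ⟨S, hS, hSB⟩ := h k hk
      exact hc ▸ (sInf_rightInvVals_le hS).trans hSB
  exact inv_anti₀ (hpos.trans_le (le_csSup hbdd ⟨1, le_rfl, rfl⟩)) hsup

end RightInverseNorms

/-- If `L : M_n^d → M_n` has a right inverse `R`, then every ampliation `L_k` has a
right inverse of norm at most `n‖R‖`; consequently `L` is completely nonsingular and
`c(L) ≥ 1/(n‖R‖)`. -/
theorem right_inverse_ampliation (d n : ℕ) (hn : 1 ≤ n)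
    (L : MatTup d n →L[ℂ] Mat n) (R : Mat n →L[ℂ] MatTup d n)
    (hLR : ∀ Y : Mat n, L (R Y) = Y) :
    (∀ k : ℕ, 1 ≤ k → ∃ S : Mat (k * n) →L[ℂ] MatTup d (k * n),
      (∀ Y, ampFun (⇑L) k (S Y) = Y) ∧ ‖S‖ ≤ (n : ℝ) * ‖R‖) ∧
    CompletelyNonsingular (⇑L) ∧ 1 / ((n : ℝ) * ‖R‖) ≤ cConst (⇑L) := by
  have hamp : ∀ k : ℕ, 1 ≤ k → ∃ S : Mat (k * n) →L[ℂ] MatTup d (k * n),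
      (∀ Y, ampFun (⇑L) k (S Y) = Y) ∧ ‖S‖ ≤ (n : ℝ) * ‖R‖ :=
    fun k _ => ⟨ampRight k R, ampFun_ampRight hLR, norm_ampRight_le R⟩
  obtain ⟨S, hS, -⟩ := hamp 1 le_rfl
  have hpos := sInf_rightInvVals_pos L.toLinearMap (by omega) ⟨_, S, hS, rfl⟩
  rw [one_div]
  exact ⟨hamp, completelyNonsingular_of_forall_rightInv_norm_le hamp,
    inv_le_cConst_of_forall_rightInv_norm_le hamp hpos⟩
end

section
/- Let a ∈ M_n^d, b ∈ M_m^d, r, s > 0, and suppose x ∈ F(a,r) ∩ F(b,s). Then there exists ε > 0 such that F(x,ε) ⊆ F(a,r) ∩ F(b,s). Consequently the sets F(a,r) form a basis of a topology on M^d. -/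
open Matrix Filter Topology
open scoped Matrix.Norms.L2Operator Kronecker

/-!
If `x = u⁻¹ y u` with `‖y - a^{(k)}‖ < r`, then `ε = r - ‖y - a^{(k)}‖` works: a point of
`F(x, ε)` is a unitary conjugate of some `w` with `‖w - x^{(l)}‖ < ε`; conjugating by the unitary
`u^{(l)}` turns `x^{(l)}` into `y^{(l)}`, and since ampliation `M ↦ 1ₗ ⊗ M` is a
`⋆`-homomorphism of C⋆-algebras, hence contractive, `‖y^{(l)} - a^{(lk)}‖ ≤ ‖y - a^{(k)}‖`.
Taking the smaller of two such radii gives the intersection property of a basis, and the sets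
`F(c, ρ)` cover `M^d` because `c ∈ F(c, ρ)`.
-/

lemma finProdFinEquiv_finProdFinEquiv {l k N : ℕ} (i : Fin l) (j : Fin k) (p : Fin N) :
    finProdFinEquiv (finProdFinEquiv (i, j), p) =
      Fin.cast (mul_assoc l k N).symm (finProdFinEquiv (i, finProdFinEquiv (j, p))) := by
  ext
  simp only [finProdFinEquiv_apply_val, Fin.val_cast]
  ring

lemma finProdFinEquiv_zero {N : ℕ} (p : Fin N) :
    finProdFinEquiv ((0 : Fin 1), p) = Fin.cast (one_mul N).symm p := by
  ext
  simp

def ampHom (l N : ℕ) : Mat N →⋆ₐ[ℂ] Mat (l * N) where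
  toFun M := Matrix.reindex finProdFinEquiv finProdFinEquiv ((1 : Matrix (Fin l) (Fin l) ℂ) ⊗ₖ M)
  map_one' := by simp [Matrix.submatrix_one_equiv]
  map_mul' A B := by
    simp only [Matrix.reindex_apply]
    rw [Matrix.submatrix_mul_equiv, ← Matrix.mul_kronecker_mul, one_mul]
  map_zero' := by simp
  map_add' A B := by simp [Matrix.kronecker_add, Matrix.submatrix_add]
  commutes' c := by
    simp [Algebra.algebraMap_eq_smul_one, Matrix.kronecker_smul, Matrix.submatrix_smul,
      Matrix.submatrix_one_equiv]
  map_star' M := by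
    simp only [Matrix.reindex_apply, star_eq_conjTranspose, Matrix.conjTranspose_submatrix,
      Matrix.conjTranspose_kronecker, conjTranspose_one]

lemma ampHom_apply_finProdFinEquiv {l N : ℕ} (M : Mat N) (i i' : Fin l) (p q : Fin N) :
    ampHom l N M (finProdFinEquiv (i, p)) (finProdFinEquiv (i', q)) =
      (1 : Matrix (Fin l) (Fin l) ℂ) i i' * M p q := by
  simp [ampHom]

lemma norm_ampHom_le (l N : ℕ) (M : Mat N) : ‖ampHom l N M‖ ≤ ‖M‖ :=
  NonUnitalStarAlgHom.norm_apply_le (ampHom l N) M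

lemma ampHom_mem_unitaryGroup (l : ℕ) {N : ℕ} {u : Mat N}
    (hu : u ∈ Matrix.unitaryGroup (Fin N) ℂ) :
    ampHom l N u ∈ Matrix.unitaryGroup (Fin (l * N)) ℂ :=
  Unitary.map_mem (ampHom l N) hu

section Tuples

variable {d : ℕ}

/-- Needed because sizes such as `l * (k * n)` and `l * k * n` are not definitionally equal. -/
def castTup {N M : ℕ} (h : N = M) (x : MatTup d N) : MatTup d M :=
  fun r => Matrix.reindex (finCongr h) (finCongr h) (x r)

lemma ampTup_apply {n : ℕ} (k : ℕ) (a : MatTup d n) (r : Fin d) :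
    ampTup k a r = ampHom k n (a r) :=
  rfl

lemma ampTup_ampTup {n : ℕ} (l k : ℕ) (a : MatTup d n) :
    ampTup l (ampTup k a) = castTup (mul_assoc l k n) (ampTup (l * k) a) := by
  funext r
  ext P Q
  obtain ⟨⟨i, p⟩, rfl⟩ := finProdFinEquiv.surjective P
  obtain ⟨⟨i', q⟩, rfl⟩ := finProdFinEquiv.surjective Q
  obtain ⟨⟨j, p⟩, rfl⟩ := finProdFinEquiv.surjective p
  obtain ⟨⟨j', q⟩, rfl⟩ := finProdFinEquiv.surjective q
  simp only [ampTup_apply, castTup, Matrix.reindex_apply, Matrix.submatrix_apply, finCongr_symm,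
    finCongr_apply, ← finProdFinEquiv_finProdFinEquiv, ampHom_apply_finProdFinEquiv]
  rw [← mul_assoc]
  congr 1
  simp only [Matrix.one_apply, EmbeddingLike.apply_eq_iff_eq, Prod.mk.injEq, ite_and, ite_mul,
    one_mul, zero_mul]

lemma ampTup_one {n : ℕ} (a : MatTup d n) : castTup (one_mul n) (ampTup 1 a) = a := by
  funext r
  ext p q
  simp [ampTup_apply, castTup, Matrix.submatrix_apply, ← finProdFinEquiv_zero,
    ampHom_apply_finProdFinEquiv]

lemma ampTup_sub {n : ℕ} (k : ℕ) (x y : MatTup d n) :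
    ampTup k (x - y) = ampTup k x - ampTup k y :=
  funext fun r => by simp only [ampTup_apply, Pi.sub_apply, map_sub]

lemma norm_ampTup_le {n : ℕ} (k : ℕ) (x : MatTup d n) : ‖ampTup k x‖ ≤ ‖x‖ :=
  pi_norm_le_iff_of_nonneg (norm_nonneg x) |>.mpr fun r =>
    (norm_ampHom_le k n (x r)).trans (norm_le_pi_norm x r)

lemma simConj_simConj {N : ℕ} (s t : Mat N) (x : MatTup d N) :
    simConj s (simConj t x) = simConj (t * s) x := by
  funext r
  simp [simConj, Matrix.mul_inv_rev, mul_assoc]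

lemma simConj_one {N : ℕ} (x : MatTup d N) : simConj 1 x = x := by
  funext r
  simp [simConj]

lemma simConj_sub {N : ℕ} (s : Mat N) (x y : MatTup d N) :
    simConj s (x - y) = simConj s x - simConj s y := by
  funext r
  simp [simConj, Matrix.mul_sub, Matrix.sub_mul]

lemma inv_eq_star_of_mem_unitaryGroup {N : ℕ} {u : Mat N}
    (hu : u ∈ Matrix.unitaryGroup (Fin N) ℂ) : u⁻¹ = star u :=
  Matrix.inv_eq_left_inv hu.1

lemma norm_simConj {N : ℕ} {u : Mat N} (hu : u ∈ Matrix.unitaryGroup (Fin N) ℂ)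
    (x : MatTup d N) : ‖simConj u x‖ = ‖x‖ := by
  have hconj (r : Fin d) : ‖simConj u x r‖₊ = ‖x r‖₊ := NNReal.eq <| by
    rw [coe_nnnorm, coe_nnnorm, simConj, inv_eq_star_of_mem_unitaryGroup hu,
      CStarRing.norm_mul_mem_unitary _ hu, CStarRing.norm_mem_unitary_mul _ (Unitary.star_mem hu)]
  simp only [Pi.norm_def, hconj]

lemma simConj_star_simConj {N : ℕ} {u : Mat N} (hu : u ∈ Matrix.unitaryGroup (Fin N) ℂ)
    (x : MatTup d N) : simConj u (simConj (star u) x) = x := by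
  rw [simConj_simConj, hu.1, simConj_one]

lemma ampTup_simConj {N : ℕ} (l : ℕ) {u : Mat N} (hu : u ∈ Matrix.unitaryGroup (Fin N) ℂ)
    (x : MatTup d N) : ampTup l (simConj u x) = simConj (ampHom l N u) (ampTup l x) := by
  funext r
  change ampHom l N (u⁻¹ * x r * u) = (ampHom l N u)⁻¹ * ampHom l N (x r) * ampHom l N u
  rw [inv_eq_star_of_mem_unitaryGroup hu,
    inv_eq_star_of_mem_unitaryGroup (ampHom_mem_unitaryGroup l hu), map_mul, map_mul, map_star]

end Tuples

section FBall

variable {d : ℕ}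

lemma fBall_mono (c : MSpace d) {ε ε' : ℝ} (h : ε ≤ ε') : FBall c ε ⊆ FBall c ε' := by
  rintro z ⟨k, hk, x, hx, u, rfl⟩
  exact ⟨k, hk, x, hx.trans_le h, u, rfl⟩

lemma mk_simConj_mem_fBall {c : MSpace d} {ρ : ℝ} {N : ℕ} {w : MatTup d N}
    (hw : (⟨N, w⟩ : MSpace d) ∈ FBall c ρ) (u : Matrix.unitaryGroup (Fin N) ℂ) :
    (⟨N, simConj (u : Mat N) w⟩ : MSpace d) ∈ FBall c ρ := by
  obtain ⟨k, hk, x, hx, v, hxw⟩ := hw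
  cases hxw
  exact ⟨k, hk, x, hx, v * u, by rw [simConj_simConj]; rfl⟩

lemma mk_mem_fBall_of_eq {n N k : ℕ} {a : MatTup d n} {ρ : ℝ} (hk : 1 ≤ k) (h : k * n = N)
    {w : MatTup d N} (hw : ‖w - castTup h (ampTup k a)‖ < ρ) :
    (⟨N, w⟩ : MSpace d) ∈ FBall ⟨n, a⟩ ρ := by
  subst h
  exact ⟨k, hk, w, hw, 1, by rw [Submonoid.coe_one, simConj_one]⟩

lemma mem_fBall_self (x : MSpace d) {ε : ℝ} (hε : 0 < ε) : x ∈ FBall x ε :=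
  mk_mem_fBall_of_eq le_rfl (one_mul x.1) (by rwa [ampTup_one, sub_self, norm_zero])

lemma exists_fBall_subset_of_mem {c x : MSpace d} {ρ : ℝ} (hx : x ∈ FBall c ρ) :
    ∃ ε : ℝ, 0 < ε ∧ FBall x ε ⊆ FBall c ρ := by
  obtain ⟨n, a⟩ := c
  obtain ⟨k, hk, y, hy, u, rfl⟩ := hx
  refine ⟨ρ - ‖y - ampTup k a‖, sub_pos.mpr hy, ?_⟩
  rintro z ⟨l, hl, w, hw, v, rfl⟩
  set U := ampHom l (k * n) (u : Mat (k * n))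
  have hU : U ∈ Matrix.unitaryGroup _ ℂ := ampHom_mem_unitaryGroup l u.2
  set w' := simConj (star U) w
  have hw' : ‖w' - ampTup l y‖ < ρ - ‖y - ampTup k a‖ := by
    rwa [← norm_simConj hU, simConj_sub, simConj_star_simConj hU, ← ampTup_simConj l u.2]
  have hw'a : ‖w' - ampTup l (ampTup k a)‖ < ρ :=
    calc ‖w' - ampTup l (ampTup k a)‖
        ≤ ‖w' - ampTup l y‖ + ‖ampTup l (y - ampTup k a)‖ := by
          rw [ampTup_sub]; exact norm_sub_le_norm_sub_add_norm_sub _ _ _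
      _ < ρ - ‖y - ampTup k a‖ + ‖y - ampTup k a‖ :=
          add_lt_add_of_lt_of_le hw' (norm_ampTup_le l _)
      _ = ρ := sub_add_cancel _ _
  have hmem : (⟨l * (k * n), w'⟩ : MSpace d) ∈ FBall ⟨n, a⟩ ρ :=
    mk_mem_fBall_of_eq (Nat.one_le_iff_ne_zero.mpr (by positivity)) (mul_assoc l k n)
      (by rwa [← ampTup_ampTup])
  rw [← simConj_star_simConj hU w, simConj_simConj]
  exact mk_simConj_mem_fBall hmem ⟨U * v, mul_mem hU v.2⟩

lemma exists_fBall_subset_inter {c c' x : MSpace d} {ρ ρ' : ℝ}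
    (hx : x ∈ FBall c ρ ∩ FBall c' ρ') :
    ∃ ε : ℝ, 0 < ε ∧ FBall x ε ⊆ FBall c ρ ∩ FBall c' ρ' := by
  obtain ⟨ε, hε, hsub⟩ := exists_fBall_subset_of_mem hx.1
  obtain ⟨ε', hε', hsub'⟩ := exists_fBall_subset_of_mem hx.2
  exact ⟨min ε ε', lt_min hε hε', fun z hz =>
    ⟨hsub (fBall_mono x (min_le_left _ _) hz), hsub' (fBall_mono x (min_le_right _ _) hz)⟩⟩

lemma isTopologicalBasis_fBall (d : ℕ) :
    @TopologicalSpace.IsTopologicalBasis (MSpace d)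
      (TopologicalSpace.generateFrom {S | ∃ (c : MSpace d) (ρ : ℝ), 0 < ρ ∧ S = FBall c ρ})
      {S | ∃ (c : MSpace d) (ρ : ℝ), 0 < ρ ∧ S = FBall c ρ} := by
  refine @TopologicalSpace.IsTopologicalBasis.mk _ (TopologicalSpace.generateFrom _) _ ?_ ?_ rfl
  · rintro _ ⟨c, ρ, -, rfl⟩ _ ⟨c', ρ', -, rfl⟩ x hx
    obtain ⟨ε, hε, hsub⟩ := exists_fBall_subset_inter hx
    exact ⟨FBall x ε, ⟨x, ε, hε, rfl⟩, mem_fBall_self x hε, hsub⟩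
  · exact Set.sUnion_eq_univ_iff.mpr fun x =>
      ⟨FBall x 1, ⟨x, 1, one_pos, rfl⟩, mem_fBall_self x one_pos⟩

end FBall

/-- If `x ∈ F(a,r) ∩ F(b,s)` then some `F(x,ε)` is contained in the intersection;
consequently the sets `F(a,r)` form the basis of a topology (the fat topology) on
`M^d`. -/
theorem fball_basis (d n m : ℕ) (a : MatTup d n) (b : MatTup d m) (r s : ℝ)
    (x : MSpace d)
    (hx : x ∈ FBall (⟨n, a⟩ : MSpace d) r ∩ FBall (⟨m, b⟩ : MSpace d) s) :
    (∃ ε : ℝ, 0 < ε ∧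
      FBall x ε ⊆ FBall (⟨n, a⟩ : MSpace d) r ∩ FBall (⟨m, b⟩ : MSpace d) s) ∧
    @TopologicalSpace.IsTopologicalBasis (MSpace d)
      (TopologicalSpace.generateFrom
        {S | ∃ (c : MSpace d) (ρ : ℝ), 0 < ρ ∧ S = FBall c ρ})
      {S | ∃ (c : MSpace d) (ρ : ℝ), 0 < ρ ∧ S = FBall c ρ} :=
  ⟨exists_fBall_subset_inter hx, isTopologicalBasis_fBall d⟩
end

section
/- Let a = (a^1, a^2, a^3) ∈ M_2^3 with a^1 = [[0,1],[0,0]], a^2 = [[1,0],[0,0]], a^3 = [[0,0],[1,0]]. Then there exists a 2×2 diagonal matrix δ of free polynomials in 3 variables such that a ∈ G_δ and, for every n and every x = (x^1,x^2,x^3) ∈ G_δ ∩ M_n^3, the spectra σ(x^1 + x^2 + x^3) and σ(−x^1 − x^3) are disjoint. -/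
open Matrix Filter Topology
open scoped Matrix.Norms.L2Operator Kronecker

/-! At `a`, `S = x¹ + x² + x³` is `[[1,1],[1,0]]`, annihilated by `X² - X - 1`, and
`T = -x¹ - x³` is `[[0,-1],[-1,0]]`, annihilated by `X² - 1`; so
`δ = diag(4(S² - S - 1), 4(T² - 1))` vanishes at `a`. On `G_δ` each diagonal block, being a
compression of `δ(x)`, has norm `< 1`, so by spectral mapping a common point `μ` of `σ(S)` and
`σ(T)` satisfies `|μ² - μ - 1| < 1/4` and `|μ² - 1| < 1/4`. The difference gives `|μ| < 1/2`,
which is incompatible with `|μ² - 1| < 1/4`. -/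

namespace Matrix

variable {𝕜 : Type*} [RCLike 𝕜] {m n n' : Type*} [Fintype m] [Fintype n] [Fintype n']

lemma l2_opNorm_one_le [DecidableEq n] : ‖(1 : Matrix n n 𝕜)‖ ≤ 1 := by
  rw [← diagonal_one, l2_opNorm_diagonal]
  exact pi_norm_le_iff_of_nonneg zero_le_one |>.mpr fun _ => norm_one.le

lemma l2_opNorm_one_submatrix_le [DecidableEq n] [DecidableEq n'] {g : n' → n}
    (hg : Function.Injective g) : ‖(1 : Matrix n n 𝕜).submatrix id g‖ ≤ 1 := by
  have hQ : ((1 : Matrix n n 𝕜).submatrix id g)ᴴ * (1 : Matrix n n 𝕜).submatrix id g = 1 := by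
    ext a b
    simp [mul_apply, one_apply, hg.eq_iff]
  have := l2_opNorm_conjTranspose_mul_self ((1 : Matrix n n 𝕜).submatrix id g)
  rw [hQ] at this
  nlinarith [l2_opNorm_one_le (𝕜 := 𝕜) (n := n'), norm_nonneg ((1 : Matrix n n 𝕜).submatrix id g)]

lemma l2_opNorm_submatrix_le {m' : Type*} [Fintype m'] [DecidableEq m] [DecidableEq m']
    [DecidableEq n] [DecidableEq n'] (A : Matrix m n 𝕜) {f : m' → m} {g : n' → n}
    (hf : Function.Injective f) (hg : Function.Injective g) : ‖A.submatrix f g‖ ≤ ‖A‖ := by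
  set P := (1 : Matrix m m 𝕜).submatrix id f
  set Q := (1 : Matrix n n 𝕜).submatrix id g
  have hPQ : A.submatrix f g = Pᴴ * A * Q := by
    ext a b
    simp [P, Q, mul_apply, one_apply]
  calc ‖A.submatrix f g‖ ≤ ‖Pᴴ‖ * ‖A‖ * ‖Q‖ := by
        rw [hPQ]; exact (l2_opNorm_mul _ _).trans (by gcongr; exact l2_opNorm_mul _ _)
    _ ≤ 1 * ‖A‖ * 1 := by
        rw [l2_opNorm_conjTranspose]
        gcongr
        exacts [l2_opNorm_one_submatrix_le hf, l2_opNorm_one_submatrix_le hg]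
    _ = ‖A‖ := by ring

lemma norm_le_l2_opNorm_of_mem_spectrum [DecidableEq n] {A : Matrix n n 𝕜} {μ : 𝕜}
    (hμ : μ ∈ spectrum 𝕜 A) : ‖μ‖ ≤ ‖A‖ :=
  (spectrum.norm_le_norm_mul_of_mem hμ).trans <|
    mul_le_of_le_one_right (norm_nonneg A) l2_opNorm_one_le

end Matrix

open Polynomial

lemma polyEval_eq_submatrix_matPolyEval {d J n : ℕ} (δ : Matrix (Fin J) (Fin J) (FreePoly d))
    (x : MatTup d n) (i j : Fin J) :
    polyEval (δ i j) x = (matPolyEval δ x).submatrix (fun t => finProdFinEquiv (i, t))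
      (fun t => finProdFinEquiv (j, t)) := by
  ext s t
  simp [matPolyEval]

lemma norm_polyEval_le_norm_matPolyEval {d J n : ℕ} (δ : Matrix (Fin J) (Fin J) (FreePoly d))
    (x : MatTup d n) (i j : Fin J) : ‖polyEval (δ i j) x‖ ≤ ‖matPolyEval δ x‖ := by
  rw [polyEval_eq_submatrix_matPolyEval]
  exact Matrix.l2_opNorm_submatrix_le _ (finProdFinEquiv.injective.comp (Prod.mk_right_injective i))
    (finProdFinEquiv.injective.comp (Prod.mk_right_injective j))

lemma polyEval_aeval {d n : ℕ} (q : FreePoly d) (p : ℂ[X]) (x : MatTup d n) :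
    polyEval (aeval q p) x = aeval (polyEval q x) p :=
  (aeval_algHom_apply (FreeAlgebra.lift ℂ x) q p).symm

lemma norm_eval_lt_one_of_mem_spectrum {d J n : ℕ} {δ : Matrix (Fin J) (Fin J) (FreePoly d)}
    {x : MatTup d n} (hx : (⟨n, x⟩ : MSpace d) ∈ GSet δ) {i : Fin J} {q : FreePoly d}
    {p : ℂ[X]} (hδ : δ i i = aeval q p) {μ : ℂ} (hμ : μ ∈ spectrum ℂ (polyEval q x)) :
    ‖p.eval μ‖ < 1 := by
  have hpμ : p.eval μ ∈ spectrum ℂ (polyEval (δ i i) x) := by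
    rw [hδ, polyEval_aeval]
    exact spectrum.subset_polynomial_aeval _ p ⟨μ, hμ, rfl⟩
  calc ‖p.eval μ‖ ≤ ‖polyEval (δ i i) x‖ := Matrix.norm_le_l2_opNorm_of_mem_spectrum hpμ
    _ ≤ ‖matPolyEval δ x‖ := norm_polyEval_le_norm_matPolyEval δ x i i
    _ < 1 := hx

lemma not_norm_eval_lt_one_and (μ : ℂ) :
    ¬ (‖(4 * (X ^ 2 - X - 1) : ℂ[X]).eval μ‖ < 1 ∧ ‖(4 * (X ^ 2 - 1) : ℂ[X]).eval μ‖ < 1) := by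
  simp only [eval_mul, eval_ofNat, eval_sub, eval_pow, eval_X, eval_one, norm_mul,
    Complex.norm_ofNat]
  rintro ⟨h₁, h₂⟩
  have hμ : ‖μ‖ < 1 / 2 := calc
    ‖μ‖ = ‖(μ ^ 2 - 1) - (μ ^ 2 - μ - 1)‖ := by ring_nf
    _ ≤ ‖μ ^ 2 - 1‖ + ‖μ ^ 2 - μ - 1‖ := norm_sub_le _ _
    _ < 1 / 2 := by linarith
  have h₃ : (1 : ℝ) ≤ ‖μ‖ ^ 2 + ‖μ ^ 2 - 1‖ := calc
    (1 : ℝ) = ‖μ ^ 2 - (μ ^ 2 - 1)‖ := by rw [sub_sub_cancel, norm_one]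
    _ ≤ ‖μ‖ ^ 2 + ‖μ ^ 2 - 1‖ := by rw [← norm_pow]; exact norm_sub_le _ _
  nlinarith [norm_nonneg μ]

/-- There is a diagonal `2 × 2` matrix `δ` of free polynomials in three variables such
that the point `a` of Section 7 lies in `G_δ`, and at every point `x` of `G_δ` the
spectra `σ(x¹+x²+x³)` and `σ(-x¹-x³)` are disjoint. -/
theorem free_nbhd_with_disjoint_spectra :
    ∃ δ : Matrix (Fin 2) (Fin 2) (FreePoly 3),
      (∀ i j, i ≠ j → δ i j = 0) ∧
      (⟨2, ![!![0, 1; 0, 0], !![1, 0; 0, 0], !![0, 0; 1, 0]]⟩ : MSpace 3) ∈ GSet δ ∧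
      ∀ (n : ℕ) (x : MatTup 3 n), (⟨n, x⟩ : MSpace 3) ∈ GSet δ →
        spectrum ℂ (x 0 + x 1 + x 2) ∩ spectrum ℂ (-(x 0) - x 2) = ∅ := by
  set ι := FreeAlgebra.ι ℂ (X := Fin 3)
  set p : ℂ[X] := 4 * (X ^ 2 - X - 1)
  set q : ℂ[X] := 4 * (X ^ 2 - 1)
  set δ := diagonal ![aeval (ι 0 + ι 1 + ι 2) p, aeval (-ι 0 - ι 2) q]
  refine ⟨δ, fun i j hij => diagonal_apply_ne _ hij, ?_, ?_⟩
  · have hδa : ∀ i j, polyEval (δ i j) ![!![0, 1; 0, 0], !![1, 0; 0, 0], !![0, 0; 1, 0]] = 0 := by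
      intro i j
      rcases eq_or_ne i j with rfl | hij
      · fin_cases i <;> ext s t <;> fin_cases s <;> fin_cases t <;>
          simp [δ, ι, polyEval, p, q, sq, mul_apply, Fin.sum_univ_two, one_apply]
      · simp [δ, diagonal_apply_ne _ hij, polyEval]
    show ‖matPolyEval δ _‖ < 1
    rw [show matPolyEval δ _ = 0 from funext₂ fun _ _ => by simp [matPolyEval, hδa]]
    simp
  · rintro n x hx
    refine Set.eq_empty_iff_forall_notMem.mpr fun μ ⟨hS, hT⟩ => not_norm_eval_lt_one_and μ
      ⟨norm_eval_lt_one_of_mem_spectrum hx (i := 0) rfl (by simpa [ι, polyEval] using hS),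
        norm_eval_lt_one_of_mem_spectrum hx (i := 1) rfl (by simpa [ι, polyEval] using hT)⟩
end
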